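/- arXiv:0706.1473 — 3 statements merged into one kernel-verified Lean document; each statement's English description precedes it below -/
import Mathlib

section
/- (Example 1: involutivity of the source Hamiltonians.) On ℝ⁴ with coordinates (q₁, q₂, p₁, p₂) and canonical Poisson bracket {f,g} = ∂f/∂q₁ ∂g/∂p₁ + ∂f/∂q₂ ∂g/∂p₂ − ∂f/∂p₁ ∂g/∂q₁ − ∂f/∂p₂ ∂g/∂q₂, let α ∈ ℝ and define on the open set { q₂ ≠ 0, p₂ ≠ 0 } the functions H₁ = ½ p₁² + ½ p₂² + α (q₁² − q₂²) p₂ / q₂ − 2 α² q₁² and H₂ = (q₁ p₂ − q₂ p₁ − 2 α q₁ q₂) / p₂. Then {H₁, H₂} = 0 at every point of { q₂ ≠ 0, p₂ ≠ 0 }. -/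
/-!
The bracket only sees the differentials of `H₁` and `H₂` at the point. The product and quotient
rules write them as `a₁ dq₁ + a₂ dq₂ + b₁ dp₁ + b₂ dp₂` and `c₁ dq₁ + c₂ dq₂ + d₁ dp₁ + d₂ dp₂`
with explicit rational coefficients, and the bracket becomes `a₁d₁ + a₂d₂ − b₁c₁ − b₂c₂`, a
rational function of `(α, q, p)` that vanishes identically once the denominators `q₂` and `p₂`
are cleared.
-/

open scoped BigOperators

/-- The canonical Poisson bracket on `ℝ⁴ = (ℝ²)_q × (ℝ²)_p` with coordinates
`(q₁,q₂,p₁,p₂)`, where `q_i = x.1 (i-1)` and `p_i = x.2 (i-1)`. -/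
noncomputable def pb (f g : ((Fin 2 → ℝ) × (Fin 2 → ℝ)) → ℝ)
    (x : (Fin 2 → ℝ) × (Fin 2 → ℝ)) : ℝ :=
  ∑ i : Fin 2,
    (fderiv ℝ f x (Pi.single i 1, 0) * fderiv ℝ g x (0, Pi.single i 1) -
      fderiv ℝ f x (0, Pi.single i 1) * fderiv ℝ g x (Pi.single i 1, 0))

theorem HasFDerivAt.div {𝕜 E : Type*} [NontriviallyNormedField 𝕜] [NormedAddCommGroup E]
    [NormedSpace 𝕜 E] {f g : E → 𝕜} {f' g' : E →L[𝕜] 𝕜} {x : E}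
    (hf : HasFDerivAt f f' x) (hg : HasFDerivAt g g' x) (hx : g x ≠ 0) :
    HasFDerivAt (fun y => f y / g y) ((g x)⁻¹ • f' - (f x / g x ^ 2) • g') x := by
  have hinv : HasFDerivAt (fun y => (g y)⁻¹) _ x := (hasFDerivAt_inv hx).comp x hg
  simp only [div_eq_mul_inv]
  refine (hf.mul hinv).congr_fderiv (ContinuousLinearMap.ext fun v => ?_)
  simp only [add_apply, smul_apply,
    ContinuousLinearMap.comp_apply, ContinuousLinearMap.toSpanSingleton_apply,
    sub_apply, smul_eq_mul]
  ring

namespace PoissonBracket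

abbrev PhaseSpace := (Fin 2 → ℝ) × (Fin 2 → ℝ)

noncomputable def dq (i : Fin 2) : PhaseSpace →L[ℝ] ℝ :=
  (ContinuousLinearMap.proj i).comp (ContinuousLinearMap.fst ℝ _ _)

noncomputable def dp (i : Fin 2) : PhaseSpace →L[ℝ] ℝ :=
  (ContinuousLinearMap.proj i).comp (ContinuousLinearMap.snd ℝ _ _)

@[simp] lemma dq_apply (i : Fin 2) (v : PhaseSpace) : dq i v = v.1 i := rfl

@[simp] lemma dp_apply (i : Fin 2) (v : PhaseSpace) : dp i v = v.2 i := rfl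

lemma hasFDerivAt_q (i : Fin 2) (x : PhaseSpace) :
    HasFDerivAt (fun y : PhaseSpace => y.1 i) (dq i) x :=
  (dq i).hasFDerivAt

lemma hasFDerivAt_p (i : Fin 2) (x : PhaseSpace) :
    HasFDerivAt (fun y : PhaseSpace => y.2 i) (dp i) x :=
  (dp i).hasFDerivAt

lemma pb_eq_of_hasFDerivAt {f g : PhaseSpace → ℝ} {x : PhaseSpace}
    {a₁ a₂ b₁ b₂ c₁ c₂ d₁ d₂ : ℝ}
    (hf : HasFDerivAt f (a₁ • dq 0 + a₂ • dq 1 + b₁ • dp 0 + b₂ • dp 1) x)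
    (hg : HasFDerivAt g (c₁ • dq 0 + c₂ • dq 1 + d₁ • dp 0 + d₂ • dp 1) x) :
    pb f g x = a₁ * d₁ + a₂ * d₂ - b₁ * c₁ - b₂ * c₂ := by
  simp only [pb, hf.fderiv, hg.fderiv, Fin.sum_univ_two, add_apply,
    smul_apply, dq_apply, dp_apply, Pi.single_apply, Pi.zero_apply,
    smul_eq_mul, if_true, one_ne_zero, zero_ne_one, if_false]
  ring

section SourceHamiltonians

variable (α : ℝ)

noncomputable def sourceH₁ (y : PhaseSpace) : ℝ :=
  (1/2) * (y.2 0)^2 + (1/2) * (y.2 1)^2 +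
    α * ((y.1 0)^2 - (y.1 1)^2) * y.2 1 / y.1 1 - 2 * α^2 * (y.1 0)^2

noncomputable def sourceH₂ (y : PhaseSpace) : ℝ :=
  (y.1 0 * y.2 1 - y.1 1 * y.2 0 - 2 * α * y.1 0 * y.1 1) / y.2 1

variable {α} {x : PhaseSpace}

lemma hasFDerivAt_sourceH₁ (hq : x.1 1 ≠ 0) :
    HasFDerivAt (sourceH₁ α)
      ((2 * α * x.1 0 * x.2 1 / x.1 1 - 4 * α ^ 2 * x.1 0) • dq 0
        + (-(α * x.2 1 * (x.1 0 ^ 2 + x.1 1 ^ 2) / x.1 1 ^ 2)) • dq 1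
        + x.2 0 • dp 0 + (x.2 1 + α * (x.1 0 ^ 2 - x.1 1 ^ 2) / x.1 1) • dp 1) x := by
  have h := ((((hasFDerivAt_p 0 x).pow 2).const_mul (1/2)).add
    (((hasFDerivAt_p 1 x).pow 2).const_mul (1/2))).add
    (((((hasFDerivAt_q 0 x).pow 2).sub ((hasFDerivAt_q 1 x).pow 2)).const_mul α).mul
      (hasFDerivAt_p 1 x) |>.div (hasFDerivAt_q 1 x) hq) |>.sub
    (((hasFDerivAt_q 0 x).pow 2).const_mul (2 * α ^ 2))
  refine h.congr_fderiv (ContinuousLinearMap.ext fun v => ?_)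
  simp only [Pi.sub_apply, Pi.mul_apply, nsmul_eq_mul, add_apply,
    sub_apply, smul_apply, dq_apply, dp_apply,
    smul_eq_mul]
  field_simp
  ring

lemma hasFDerivAt_sourceH₂ (hp : x.2 1 ≠ 0) :
    HasFDerivAt (sourceH₂ α)
      (((x.2 1 - 2 * α * x.1 1) / x.2 1) • dq 0 + (-(x.2 0 + 2 * α * x.1 0) / x.2 1) • dq 1
        + (-(x.1 1 / x.2 1)) • dp 0
        + (x.1 1 * (x.2 0 + 2 * α * x.1 0) / x.2 1 ^ 2) • dp 1) x := by
  have h := (((hasFDerivAt_q 0 x).mul (hasFDerivAt_p 1 x)).sub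
    ((hasFDerivAt_q 1 x).mul (hasFDerivAt_p 0 x))).sub
    (((hasFDerivAt_q 0 x).const_mul (2 * α)).mul (hasFDerivAt_q 1 x)) |>.div
    (hasFDerivAt_p 1 x) hp
  refine h.congr_fderiv (ContinuousLinearMap.ext fun v => ?_)
  simp only [Pi.sub_apply, Pi.mul_apply, add_apply,
    sub_apply, smul_apply, dq_apply, dp_apply,
    smul_eq_mul]
  field_simp
  ring

end SourceHamiltonians

end PoissonBracket

open PoissonBracket in
/-- Example 1: involutivity of the source Hamiltonians:
`{H₁, H₂} = 0` on `{q₂ ≠ 0, p₂ ≠ 0}`, where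
`H₁ = ½p₁² + ½p₂² + α(q₁² − q₂²)p₂/q₂ − 2α²q₁²` and
`H₂ = (q₁p₂ − q₂p₁ − 2αq₁q₂)/p₂`. -/
theorem stmt_15 (α : ℝ) (x : (Fin 2 → ℝ) × (Fin 2 → ℝ))
    (hq2 : x.1 1 ≠ 0) (hp2 : x.2 1 ≠ 0) :
    pb (fun y => (1/2) * (y.2 0)^2 + (1/2) * (y.2 1)^2 +
          α * ((y.1 0)^2 - (y.1 1)^2) * y.2 1 / y.1 1 - 2 * α^2 * (y.1 0)^2)
       (fun y => (y.1 0 * y.2 1 - y.1 1 * y.2 0 - 2 * α * y.1 0 * y.1 1) / y.2 1)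
       x = 0 := by
  change pb (sourceH₁ α) (sourceH₂ α) x = 0
  rw [pb_eq_of_hasFDerivAt (hasFDerivAt_sourceH₁ hq2) (hasFDerivAt_sourceH₂ hp2)]
  field_simp
  ring
end

section
/- (Example 1: involutivity of the Stäckel-transformed Hamiltonians.) On ℝ⁴ with coordinates (q₁, q₂, p₁, p₂) and canonical Poisson bracket, let α̃ ∈ ℝ and define on the open set { q₁ ≠ 0, q₂ ≠ 0 } the functions H̃₁ = ((q₁² + q₂² − 2 α̃ q₁)/(2 q₁ q₂)) p₁ p₂ + (α̃ (q₁² − α̃ q₁ + q₂²)/(2 q₁ q₂²)) p₂² and H̃₂ = (q₁ p₂ − q₂ p₁ − α̃ p₂)/(2 q₁ q₂). Then {H̃₁, H̃₂} = 0 at every point of { q₁ ≠ 0, q₂ ≠ 0 }. -/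
open scoped BigOperators

/-!
Away from `q₁ = 0` and `q₂ = 0` both Hamiltonians are smooth, so their differentials follow from
the product and quotient rules. Substituting them into the bracket and clearing the denominators
`2 q₁ q₂` and `2 q₁ q₂²`, the identity `{H̃₁, H̃₂} = 0` becomes a polynomial identity in
`q₁, q₂, p₁, p₂, α̃`.
-/

section QuotientRule

variable {𝕜 E : Type*} [NontriviallyNormedField 𝕜] [NormedAddCommGroup E] [NormedSpace 𝕜 E]
  {c d : E → 𝕜} {c' d' : E →L[𝕜] 𝕜} {x : E}

theorem HasFDerivAt.fun_div (hc : HasFDerivAt c c' x) (hd : HasFDerivAt d d' x) (hx : d x ≠ 0) :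
    HasFDerivAt (fun y => c y / d y) ((d x ^ 2)⁻¹ • (d x • c' - c x • d')) x := by
  simp only [div_eq_mul_inv]
  refine (hc.fun_mul ((hasDerivAt_inv hx).comp_hasFDerivAt x hd)).congr_fderiv ?_
  ext v
  simp only [Function.comp_apply, add_apply, smul_apply, smul_eq_mul, neg_mul, mul_neg, sub_apply]
  field_simp
  ring

end QuotientRule

section Coordinates

variable {𝕜 F ι : Type*} [NontriviallyNormedField 𝕜] [NormedAddCommGroup F] [NormedSpace 𝕜 F]

theorem hasFDerivAt_fst_apply (i : ι) (x : (ι → 𝕜) × F) :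
    HasFDerivAt (fun y : (ι → 𝕜) × F => y.1 i)
      ((ContinuousLinearMap.proj i).comp (ContinuousLinearMap.fst 𝕜 (ι → 𝕜) F)) x :=
  ((ContinuousLinearMap.proj i).comp (ContinuousLinearMap.fst 𝕜 (ι → 𝕜) F)).hasFDerivAt

theorem hasFDerivAt_snd_apply (i : ι) (x : F × (ι → 𝕜)) :
    HasFDerivAt (fun y : F × (ι → 𝕜) => y.2 i)
      ((ContinuousLinearMap.proj i).comp (ContinuousLinearMap.snd 𝕜 F (ι → 𝕜))) x :=
  ((ContinuousLinearMap.proj i).comp (ContinuousLinearMap.snd 𝕜 F (ι → 𝕜))).hasFDerivAt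

end Coordinates

/-- Example 1: involutivity of the Stäckel-transformed Hamiltonians:
`{H̃₁, H̃₂} = 0` on `{q₁ ≠ 0, q₂ ≠ 0}`, where
`H̃₁ = ((q₁² + q₂² − 2α̃q₁)/(2q₁q₂)) p₁p₂ + (α̃(q₁² − α̃q₁ + q₂²)/(2q₁q₂²)) p₂²` and
`H̃₂ = (q₁p₂ − q₂p₁ − α̃p₂)/(2q₁q₂)`. -/
theorem stmt_16 (αt : ℝ) (x : (Fin 2 → ℝ) × (Fin 2 → ℝ))
    (hq1 : x.1 0 ≠ 0) (hq2 : x.1 1 ≠ 0) :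
    pb (fun y => (((y.1 0)^2 + (y.1 1)^2 - 2 * αt * y.1 0) / (2 * y.1 0 * y.1 1)) *
          y.2 0 * y.2 1 +
          (αt * ((y.1 0)^2 - αt * y.1 0 + (y.1 1)^2) / (2 * y.1 0 * (y.1 1)^2)) *
          (y.2 1)^2)
       (fun y => (y.1 0 * y.2 1 - y.1 1 * y.2 0 - αt * y.2 1) / (2 * y.1 0 * y.1 1))
       x = 0 := by
  have dq₁ := hasFDerivAt_fst_apply 0 x
  have dq₂ := hasFDerivAt_fst_apply 1 x
  have dp₁ := hasFDerivAt_snd_apply 0 x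
  have dp₂ := hasFDerivAt_snd_apply 1 x
  have hD : 2 * x.1 0 * x.1 1 ≠ 0 := by positivity
  have hD' : 2 * x.1 0 * x.1 1 ^ 2 ≠ 0 := by positivity
  have dD := (dq₁.const_mul 2).fun_mul dq₂
  have dD' := (dq₁.const_mul 2).fun_mul (dq₂.pow 2)
  have dA := (((dq₁.pow 2).fun_add (dq₂.pow 2)).fun_sub (dq₁.const_mul (2 * αt))).fun_div dD hD
  have dB := ((((dq₁.pow 2).fun_sub (dq₁.const_mul αt)).fun_add (dq₂.pow 2)).const_mul αt).fun_div
    dD' hD'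
  have dH₁ := ((dA.fun_mul dp₁).fun_mul dp₂).fun_add (dB.fun_mul (dp₂.pow 2))
  have dH₂ :=
    (((dq₁.fun_mul dp₂).fun_sub (dq₂.fun_mul dp₁)).fun_sub (dp₂.const_mul αt)).fun_div dD hD
  rw [pb, Fin.sum_univ_two, dH₁.fderiv, dH₂.fderiv]
  simp only [Nat.add_one_sub_one, pow_one, nsmul_eq_mul, Nat.cast_ofNat, add_apply, sub_apply,
    smul_apply, smul_eq_mul, ContinuousLinearMap.comp_apply, ContinuousLinearMap.coe_fst',
    ContinuousLinearMap.coe_snd', ContinuousLinearMap.proj_apply, Pi.zero_apply,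
    Pi.single_eq_same, Pi.single_eq_of_ne one_ne_zero, Pi.single_eq_of_ne zero_ne_one]
  field_simp
  ring
end

section
/- (Example 2: involutivity of the extended Hénon–Heiles Hamiltonians.) On ℝ⁴ with coordinates (q₁, q₂, p₁, p₂) and canonical Poisson bracket, let α₁, α₂ ∈ ℝ and define H₁ = ½ p₁² + ½ p₂² − α₁ (q₁³ + q₁ q₂²/2) − α₂ q₁ and H₂ = ½ q₂ p₁ p₂ − ½ q₁ p₂² − α₁ (q₂⁴/16 + q₁² q₂²/4) − α₂ q₂²/4. Then {H₁, H₂} = 0 everywhere on ℝ⁴. -/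
/-!
Both Hamiltonians are polynomials, so their differentials at `x` are the explicit linear forms
`a ⬝ᵥ dq + b ⬝ᵥ dp` and `c ⬝ᵥ dq + d ⬝ᵥ dp`, and the bracket is `a ⬝ᵥ d - b ⬝ᵥ c`. Substituting
the gradients, this polynomial in `q`, `p`, `α₁`, `α₂` cancels identically.
-/

open scoped BigOperators

namespace HenonHeiles

section GradForm

variable {n : ℕ}

noncomputable def gradForm (a b : Fin n → ℝ) : (Fin n → ℝ) × (Fin n → ℝ) →L[ℝ] ℝ :=
  (dotProductBilin ℝ ℝ a).toContinuousLinearMap.comp (ContinuousLinearMap.fst ℝ _ _) +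
    (dotProductBilin ℝ ℝ b).toContinuousLinearMap.comp (ContinuousLinearMap.snd ℝ _ _)

@[simp]
lemma gradForm_apply (a b : Fin n → ℝ) (v : (Fin n → ℝ) × (Fin n → ℝ)) :
    gradForm a b v = a ⬝ᵥ v.1 + b ⬝ᵥ v.2 :=
  rfl

lemma hasFDerivAt_fst_apply (i : Fin n) (x : (Fin n → ℝ) × (Fin n → ℝ)) :
    HasFDerivAt (fun y : (Fin n → ℝ) × (Fin n → ℝ) => y.1 i) (gradForm (Pi.single i 1) 0) x := by
  convert (gradForm (n := n) (Pi.single i 1) 0).hasFDerivAt using 1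
  ext y
  simp

lemma hasFDerivAt_snd_apply (i : Fin n) (x : (Fin n → ℝ) × (Fin n → ℝ)) :
    HasFDerivAt (fun y : (Fin n → ℝ) × (Fin n → ℝ) => y.2 i) (gradForm 0 (Pi.single i 1)) x := by
  convert (gradForm (n := n) 0 (Pi.single i 1)).hasFDerivAt using 1
  ext y
  simp

end GradForm

lemma pb_eq_of_hasFDerivAt {f g : (Fin 2 → ℝ) × (Fin 2 → ℝ) → ℝ}
    {x : (Fin 2 → ℝ) × (Fin 2 → ℝ)} {a b c d : Fin 2 → ℝ}
    (hf : HasFDerivAt f (gradForm a b) x) (hg : HasFDerivAt g (gradForm c d) x) :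
    pb f g x = a ⬝ᵥ d - b ⬝ᵥ c := by
  simp [pb, hf.fderiv, hg.fderiv, dotProduct, Finset.sum_sub_distrib, mul_comm]

abbrev PhaseSpace := (Fin 2 → ℝ) × (Fin 2 → ℝ)

noncomputable def hamiltonian₁ (α₁ α₂ : ℝ) (y : PhaseSpace) : ℝ :=
  (1/2) * (y.2 0)^2 + (1/2) * (y.2 1)^2 - α₁ * ((y.1 0)^3 + y.1 0 * (y.1 1)^2 / 2) - α₂ * y.1 0

noncomputable def hamiltonian₂ (α₁ α₂ : ℝ) (y : PhaseSpace) : ℝ :=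
  (1/2) * y.1 1 * y.2 0 * y.2 1 - (1/2) * y.1 0 * (y.2 1)^2 -
    α₁ * ((y.1 1)^4 / 16 + (y.1 0)^2 * (y.1 1)^2 / 4) - α₂ * (y.1 1)^2 / 4

lemma hasFDerivAt_hamiltonian₁ (α₁ α₂ : ℝ) (x : PhaseSpace) :
    HasFDerivAt (hamiltonian₁ α₁ α₂)
      (gradForm ![-(α₁ * (3 * (x.1 0)^2 + (x.1 1)^2 / 2) + α₂), -(α₁ * x.1 0 * x.1 1)] x.2) x := by
  have hq := fun i => hasFDerivAt_fst_apply i x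
  have hp := fun i => hasFDerivAt_snd_apply i x
  have h := (((((hp 0).pow 2).const_mul (1/2)).add (((hp 1).pow 2).const_mul (1/2))).sub
    ((((hq 0).pow 3).add (((hq 0).fun_mul ((hq 1).pow 2)).mul_const 2⁻¹)).const_mul α₁)).sub
    ((hq 0).const_mul α₂)
  refine (h.congr_fderiv ?_).congr_of_eventuallyEq (.of_forall fun y => ?_)
  · refine ContinuousLinearMap.ext fun v => ?_
    simp only [sub_apply, add_apply, smul_apply, gradForm_apply, single_dotProduct,
      zero_dotProduct, Matrix.vec2_dotProduct, Matrix.cons_val_zero, Matrix.cons_val_one,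
      smul_eq_mul, nsmul_eq_mul]
    ring
  · simp only [hamiltonian₁, Pi.add_apply, Pi.sub_apply]
    ring

lemma hasFDerivAt_hamiltonian₂ (α₁ α₂ : ℝ) (x : PhaseSpace) :
    HasFDerivAt (hamiltonian₂ α₁ α₂)
      (gradForm
        ![-(x.2 1)^2 / 2 - α₁ * x.1 0 * (x.1 1)^2 / 2,
          x.2 0 * x.2 1 / 2 - α₁ * ((x.1 1)^3 / 4 + (x.1 0)^2 * x.1 1 / 2) - α₂ * x.1 1 / 2]
        ![x.1 1 * x.2 1 / 2, x.1 1 * x.2 0 / 2 - x.1 0 * x.2 1]) x := by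
  have hq := fun i => hasFDerivAt_fst_apply i x
  have hp := fun i => hasFDerivAt_snd_apply i x
  have h := (((((hq 1).const_mul (1/2)).fun_mul (hp 0)).fun_mul (hp 1)).sub
    (((hq 0).const_mul (1/2)).fun_mul ((hp 1).pow 2))).sub
    (((((hq 1).pow 4).mul_const 16⁻¹).add
      ((((hq 0).pow 2).fun_mul ((hq 1).pow 2)).mul_const 4⁻¹)).const_mul α₁)
    |>.sub ((((hq 1).pow 2).const_mul α₂).mul_const 4⁻¹)
  refine (h.congr_fderiv ?_).congr_of_eventuallyEq (.of_forall fun y => ?_)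
  · refine ContinuousLinearMap.ext fun v => ?_
    simp only [sub_apply, add_apply, smul_apply, gradForm_apply, single_dotProduct,
      zero_dotProduct, Matrix.vec2_dotProduct, Matrix.cons_val_zero, Matrix.cons_val_one,
      smul_eq_mul, nsmul_eq_mul]
    ring
  · simp only [hamiltonian₂, Pi.add_apply, Pi.sub_apply]
    ring

theorem pb_hamiltonian₁_hamiltonian₂ (α₁ α₂ : ℝ) (x : PhaseSpace) :
    pb (hamiltonian₁ α₁ α₂) (hamiltonian₂ α₁ α₂) x = 0 := by
  rw [pb_eq_of_hasFDerivAt (hasFDerivAt_hamiltonian₁ α₁ α₂ x) (hasFDerivAt_hamiltonian₂ α₁ α₂ x)]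
  simp only [Matrix.vec2_dotProduct, Matrix.cons_val_zero, Matrix.cons_val_one]
  ring

end HenonHeiles

/-- Example 2: involutivity of the extended Hénon–Heiles
Hamiltonians: `{H₁, H₂} = 0` everywhere on `ℝ⁴`, where
`H₁ = ½p₁² + ½p₂² − α₁(q₁³ + q₁q₂²/2) − α₂q₁` and
`H₂ = ½q₂p₁p₂ − ½q₁p₂² − α₁(q₂⁴/16 + q₁²q₂²/4) − α₂q₂²/4`. -/
theorem stmt_17 (α₁ α₂ : ℝ) (x : (Fin 2 → ℝ) × (Fin 2 → ℝ)) :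
    pb (fun y => (1/2) * (y.2 0)^2 + (1/2) * (y.2 1)^2 -
          α₁ * ((y.1 0)^3 + y.1 0 * (y.1 1)^2 / 2) - α₂ * y.1 0)
       (fun y => (1/2) * y.1 1 * y.2 0 * y.2 1 - (1/2) * y.1 0 * (y.2 1)^2 -
          α₁ * ((y.1 1)^4 / 16 + (y.1 0)^2 * (y.1 1)^2 / 4) - α₂ * (y.1 1)^2 / 4)
       x = 0 :=
  HenonHeiles.pb_hamiltonian₁_hamiltonian₂ α₁ α₂ x
end
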